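/- Every μ-measure-zero subset of 2^ω can be covered by 𝔡 many closed measure-zero sets: for every null G ⊆ 2^ω there exists a family C of closed μ-measure-zero subsets of 2^ω with |C| ≤ 𝔡 and G ⊆ ⋃C. -/

import Mathlib

open MeasureTheory Set Filter Cardinal

/-- `μ` is the uniform product ("fair coin") probability measure on Cantor space `2^ω`,
characterized by its values on cylinders. -/
def IsFairCoin (μ : Measure (ℕ → Bool)) : Prop :=
  ∀ (s : Finset ℕ) (σ : ℕ → Bool),
    μ {x : ℕ → Bool | ∀ i ∈ s, x i = σ i} = (1 / 2 : ENNReal) ^ s.card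

/-- The σ-ideal of μ-null sets. -/
def nullIdeal (μ : Measure (ℕ → Bool)) : Set (Set (ℕ → Bool)) := {A | μ A = 0}

/-- The σ-ideal of meager subsets of Cantor space. -/
def meagerIdeal : Set (Set (ℕ → Bool)) := {A | IsMeagre A}

/-- The σ-ideal generated by closed measure zero sets. -/
def closedNullIdeal (μ : Measure (ℕ → Bool)) : Set (Set (ℕ → Bool)) :=
  {A | ∃ F : ℕ → Set (ℕ → Bool), (∀ n, IsClosed (F n) ∧ μ (F n) = 0) ∧ A ⊆ ⋃ n, F n}

/-- `add(I, J)`: the least cardinality of a subfamily of `I` whose union is not in `J`. -/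
noncomputable def addIJ (I J : Set (Set (ℕ → Bool))) : Cardinal :=
  sInf {c : Cardinal | ∃ A : Set (Set (ℕ → Bool)), A ⊆ I ∧ ⋃₀ A ∉ J ∧ c = #A}

/-- `cov(J)`: the least cardinality of a subfamily of `J` covering the whole space. -/
noncomputable def covI (J : Set (Set (ℕ → Bool))) : Cardinal :=
  sInf {c : Cardinal | ∃ A : Set (Set (ℕ → Bool)), A ⊆ J ∧ ⋃₀ A = Set.univ ∧ c = #A}

/-- `unif(J)`: the least cardinality of a set of reals not in `J`. -/
noncomputable def unifI (J : Set (Set (ℕ → Bool))) : Cardinal :=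
  sInf {c : Cardinal | ∃ X : Set (ℕ → Bool), X ∉ J ∧ c = #X}

/-- `cof(I, J)`: the least cardinality of a subfamily of `J` cofinal over `I`. -/
noncomputable def cofIJ (I J : Set (Set (ℕ → Bool))) : Cardinal :=
  sInf {c : Cardinal | ∃ A : Set (Set (ℕ → Bool)), A ⊆ J ∧
    (∀ B ∈ I, ∃ C ∈ A, B ⊆ C) ∧ c = #A}

/-- The dominating number 𝔡. -/
noncomputable def frakD : Cardinal :=
  sInf {c : Cardinal | ∃ F : Set (ℕ → ℕ),
    (∀ g : ℕ → ℕ, ∃ f ∈ F, ∀ᶠ n in atTop, g n ≤ f n) ∧ c = #F}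

/-- The unbounding number 𝔟. -/
noncomputable def frakB : Cardinal :=
  sInf {c : Cardinal | ∃ F : Set (ℕ → ℕ),
    (∀ g : ℕ → ℕ, ∃ f ∈ F, ¬ ∀ᶠ n in atTop, f n ≤ g n) ∧ c = #F}

/-!
Choose open sets `U k ⊇ G` with `μ (U k) → 0` and a countable family `B n` of closed sets forming
a neighbourhood base. For `x ∈ G` let `g k` index a `B n` with `x ∈ B n ⊆ U k`. If `f` dominates
`g` from `k₀` on, then `x` lies in the closed set `⋂_{k ≥ k₀} ⋃ {B n | n ≤ f k, B n ⊆ U k}`, which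
is null because it sits inside every `U k` with `k ≥ k₀`. Letting `f` range over a dominating
family of size `𝔡` and `k₀` over `ℕ` gives the cover.
-/

open Topology

def IsDominating (F : Set (ℕ → ℕ)) : Prop :=
  ∀ g : ℕ → ℕ, ∃ f ∈ F, ∀ᶠ n in atTop, g n ≤ f n

theorem IsDominating.infinite {F : Set (ℕ → ℕ)} (hF : IsDominating F) : F.Infinite := by
  intro hfin
  obtain ⟨f, hf, hdom⟩ := hF fun n => hfin.toFinset.sup (· n) + 1
  obtain ⟨n, hn⟩ := hdom.exists
  have : f n ≤ hfin.toFinset.sup (· n) := Finset.le_sup (f := (· n)) (hfin.mem_toFinset.mpr hf)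
  omega

theorem exists_isDominating_mk_eq_frakD : ∃ F : Set (ℕ → ℕ), IsDominating F ∧ #F = frakD := by
  have hne : {c : Cardinal | ∃ F : Set (ℕ → ℕ), IsDominating F ∧ c = #F}.Nonempty :=
    ⟨_, univ, fun g => ⟨g, mem_univ g, Eventually.of_forall fun _ => le_rfl⟩, rfl⟩
  obtain ⟨F, hF, hcard⟩ := csInf_mem hne
  exact ⟨F, hF, hcard.symm⟩

theorem exists_seq_isClosed_nhds_basis (X : Type*) [TopologicalSpace X]
    [SecondCountableTopology X] [RegularSpace X] :
    ∃ B : ℕ → Set X, (∀ n, IsClosed (B n)) ∧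
      ∀ ⦃x U⦄, IsOpen U → x ∈ U → ∃ n, x ∈ B n ∧ B n ⊆ U := by
  obtain ⟨b, hbc, -, hb⟩ := TopologicalSpace.exists_countable_basis X
  refine ⟨fun n => closure (enumerateCountable hbc ∅ n), fun n => isClosed_closure, ?_⟩
  intro x U hU hx
  obtain ⟨N, ⟨hN, hNc⟩, hNU⟩ := (closed_nhds_basis x).mem_iff.mp (hU.mem_nhds hx)
  obtain ⟨V, hVb, hxV, hVN⟩ := hb.mem_nhds_iff.mp hN
  obtain ⟨n, rfl⟩ := subset_range_enumerate hbc ∅ hVb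
  exact ⟨n, subset_closure hxV, (closure_minimal hVN hNc).trans hNU⟩

section DominationCover

variable {X : Type*} {B U : ℕ → Set X}

def basicUnion (B U : ℕ → Set X) (k m : ℕ) : Set X :=
  ⋃ n ∈ {n | n ≤ m ∧ B n ⊆ U k}, B n

def dominationCover (B U : ℕ → Set X) (f : ℕ → ℕ) (k₀ : ℕ) : Set X :=
  ⋂ k ≥ k₀, basicUnion B U k (f k)

theorem basicUnion_subset (k m : ℕ) : basicUnion B U k m ⊆ U k :=
  iUnion₂_subset fun _ hn => hn.2

theorem dominationCover_subset {f : ℕ → ℕ} {k₀ k : ℕ} (hk : k₀ ≤ k) :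
    dominationCover B U f k₀ ⊆ U k :=
  (biInter_subset_of_mem hk).trans (basicUnion_subset k (f k))

theorem measure_dominationCover [MeasurableSpace X] {μ : Measure X}
    (hμU : Tendsto (fun k => μ (U k)) atTop (𝓝 0)) (f : ℕ → ℕ) (k₀ : ℕ) :
    μ (dominationCover B U f k₀) = 0 :=
  le_antisymm (ge_of_tendsto hμU (eventually_atTop.mpr
    ⟨k₀, fun _ hk => measure_mono (dominationCover_subset hk)⟩)) zero_le

variable [TopologicalSpace X]

theorem isClosed_basicUnion (hB : ∀ n, IsClosed (B n)) (k m : ℕ) :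
    IsClosed (basicUnion B U k m) :=
  ((finite_le_nat m).subset fun _ hn => hn.1).isClosed_biUnion fun n _ => hB n

theorem isClosed_dominationCover (hB : ∀ n, IsClosed (B n)) (f : ℕ → ℕ) (k₀ : ℕ) :
    IsClosed (dominationCover B U f k₀) :=
  isClosed_biInter fun k _ => isClosed_basicUnion hB k (f k)

theorem exists_forall_mem_dominationCover
    (hB : ∀ ⦃x U⦄, IsOpen U → x ∈ U → ∃ n, x ∈ B n ∧ B n ⊆ U) (hU : ∀ k, IsOpen (U k))
    {x : X} (hx : ∀ k, x ∈ U k) :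
    ∃ g : ℕ → ℕ, ∀ f k₀, (∀ k ≥ k₀, g k ≤ f k) → x ∈ dominationCover B U f k₀ := by
  choose g hxg hgU using fun k => hB (hU k) (hx k)
  refine ⟨g, fun f k₀ hfg => mem_iInter₂.mpr fun k hk => ?_⟩
  exact mem_biUnion (x := g k) ⟨hfg k hk, hgU k⟩ (hxg k)

theorem iInter_subset_iUnion_dominationCover
    (hB : ∀ ⦃x U⦄, IsOpen U → x ∈ U → ∃ n, x ∈ B n ∧ B n ⊆ U) (hU : ∀ k, IsOpen (U k))
    {F : Set (ℕ → ℕ)} (hF : IsDominating F) :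
    ⋂ k, U k ⊆ ⋃ p : F × ℕ, dominationCover B U p.1 p.2 := by
  intro x hx
  obtain ⟨g, hg⟩ := exists_forall_mem_dominationCover hB hU (mem_iInter.mp hx)
  obtain ⟨f, hfF, hgf⟩ := hF g
  obtain ⟨k₀, hk₀⟩ := eventually_atTop.mp hgf
  exact mem_iUnion.mpr ⟨(⟨f, hfF⟩, k₀), hg f k₀ hk₀⟩

end DominationCover

theorem MeasureTheory.Measure.exists_isOpen_superset_measure_tendsto_zero {X : Type*}
    [TopologicalSpace X] [MeasurableSpace X] {μ : Measure X} [μ.OuterRegular] {G : Set X}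
    (hG : μ G = 0) :
    ∃ U : ℕ → Set X, (∀ k, IsOpen (U k)) ∧ G ⊆ ⋂ k, U k ∧
      Tendsto (fun k => μ (U k)) atTop (𝓝 0) := by
  have hpos (k : ℕ) : μ G < 2⁻¹ ^ k := hG ▸ ENNReal.pow_pos (by norm_num) k
  choose U hGU hU hμU using fun k => G.exists_isOpen_lt_of_lt _ (hpos k)
  refine ⟨U, hU, subset_iInter hGU, ?_⟩
  exact tendsto_of_tendsto_of_tendsto_of_le_of_le tendsto_const_nhds
    (ENNReal.tendsto_pow_atTop_nhds_zero_of_lt_one (by norm_num)) (fun _ => zero_le)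
    fun k => (hμU k).le

theorem exists_isClosed_null_cover_mk_le_frakD {X : Type} [TopologicalSpace X]
    [SecondCountableTopology X] [RegularSpace X] [MeasurableSpace X] (μ : Measure X)
    [μ.OuterRegular] {G : Set X} (hG : μ G = 0) :
    ∃ C : Set (Set X), (∀ A ∈ C, IsClosed A ∧ μ A = 0) ∧ #C ≤ frakD ∧ G ⊆ ⋃₀ C := by
  obtain ⟨B, hBc, hB⟩ := exists_seq_isClosed_nhds_basis X
  obtain ⟨U, hU, hGU, hμU⟩ := μ.exists_isOpen_superset_measure_tendsto_zero hG
  obtain ⟨F, hF, hFd⟩ := exists_isDominating_mk_eq_frakD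
  have : Infinite F := hF.infinite.to_subtype
  refine ⟨range fun p : F × ℕ => dominationCover B U p.1 p.2, ?_, ?_, ?_⟩
  · rintro _ ⟨p, rfl⟩
    exact ⟨isClosed_dominationCover hBc _ _, measure_dominationCover hμU _ _⟩
  · calc #(range fun p : F × ℕ => dominationCover B U p.1 p.2) ≤ #(F × ℕ) := mk_range_le
      _ = #F := by rw [mk_prod, lift_id, lift_id, mk_nat, mul_aleph0_eq (aleph0_le_mk F)]
      _ = frakD := hFd
  · rw [sUnion_range]
    exact hGU.trans (iInter_subset_iUnion_dominationCover hB hU hF)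

theorem null_covered_by_d_closed_null (μ : Measure (ℕ → Bool)) (hμ : IsFairCoin μ)
    (G : Set (ℕ → Bool)) (hG : μ G = 0) :
    ∃ C : Set (Set (ℕ → Bool)),
      (∀ A ∈ C, IsClosed A ∧ μ A = 0) ∧ #C ≤ frakD ∧ G ⊆ ⋃₀ C := by
  -- finite, hence outer regular on the metrizable Cantor space
  have : IsProbabilityMeasure μ := ⟨by simpa using hμ ∅ fun _ => true⟩
  exact exists_isClosed_null_cover_mk_le_frakD μ hG
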